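/- arXiv:1212.1071 — 7 statements merged into one kernel-verified Lean document; each statement's English description precedes it below -/
import Mathlib

section
/- Let F be a t-intersecting family of k-multisets of [n] and T an arbitrary t-multiset. If F_T = {A ∈ F : T ⊆ A} is not all of F, then |F_T| ≤ k · binomial(n·k, k−t−1). -/
/-!
Pick `B ∈ F` with `T ⊄ B`, say `B i₀ < T i₀`. If `A ⊇ T` had `A j ≤ T j` at every `j` where
`T j < B j`, then `min (A j) (B j) ≤ T j` everywhere, strictly at `i₀`, so `|A ∩ B| < t`.
Hence every `A ∈ F_T` contains `T + e_j` for some `j` with `T j < B j`; there are at most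
`|B| = k` such `j`, and `A ↦ A - (T + e_j)` embeds the members of `F` containing `T + e_j` into
the `(k - t - 1)`-multisets of `[n]`, of which there are `C(n + k - t - 2, k - t - 1)`.
-/

open Finset

namespace Nat

lemma choose_add_sub_one_le_choose_mul {n m k : ℕ} (hn : 0 < n) (hm : m < k) :
    (n + m - 1).choose m ≤ (n * k).choose m := by
  refine choose_le_choose m ?_
  have : n + k ≤ n * k + 1 := by nlinarith
  omega

end Nat

variable {ι : Type*}

lemma add_single_one_le [DecidableEq ι] {T A : ι → ℕ} {j : ι} (hTA : ∀ i, T i ≤ A i)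
    (hj : T j < A j) (i : ι) : (T + Pi.single j 1 : _ → ℕ) i ≤ A i := by
  rcases eq_or_ne i j with rfl | hij
  · simpa using hj
  · simpa [hij] using hTA i

variable [Fintype ι]

lemma card_piAntidiag_univ [DecidableEq ι] (m : ℕ) :
    #(piAntidiag (univ : Finset ι) m) = (Fintype.card ι + m - 1).choose m := by
  rw [← map_sym_eq_piAntidiag, card_map, sym_univ, card_univ, Sym.card_sym_eq_choose]

lemma card_filter_forall_le_le_card_piAntidiag [DecidableEq ι] {k : ℕ} {s : Finset (ι → ℕ)}
    (hs : ∀ A ∈ s, ∑ i, A i = k) (U : ι → ℕ) :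
    #{A ∈ s | ∀ i, U i ≤ A i} ≤ #(piAntidiag (univ : Finset ι) (k - ∑ i, U i)) := by
  refine card_le_card_of_injOn (· - U) (fun A hA => ?_) (fun A hA A' hA' hAA' => ?_)
  · obtain ⟨hAs, hUA⟩ := mem_filter.mp hA
    simp only [mem_coe, mem_piAntidiag, Pi.sub_apply]
    rw [sum_tsub_distrib _ fun i _ => hUA i, hs A hAs]
    exact ⟨rfl, fun _ _ => mem_univ _⟩
  · have hUA : U ≤ A := (mem_filter.mp hA).2
    have hUA' : U ≤ A' := (mem_filter.mp hA').2
    calc A = A - U + U := (tsub_add_cancel_of_le hUA).symm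
      _ = A' - U + U := congrArg (· + U) hAA'
      _ = A' := tsub_add_cancel_of_le hUA'

lemma card_filter_lt_le_sum (a B : ι → ℕ) : #{j | a j < B j} ≤ ∑ j, B j :=
  calc #{j | a j < B j} = ∑ j ∈ {j | a j < B j}, 1 := card_eq_sum_ones _
    _ ≤ ∑ j ∈ {j | a j < B j}, B j := sum_le_sum fun j hj => by
      have := (mem_filter.mp hj).2
      omega
    _ ≤ ∑ j, B j := sum_le_sum_of_subset (subset_univ _)

lemma exists_lt_lt_of_sum_le_sum_min {A B T : ι → ℕ} (hTA : ∀ i, T i ≤ A i)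
    (hTB : ¬ ∀ i, T i ≤ B i) (h : ∑ i, T i ≤ ∑ i, min (A i) (B i)) :
    ∃ j, T j < A j ∧ T j < B j := by
  by_contra! hAB
  obtain ⟨i₀, hi₀⟩ := not_forall.mp hTB
  refine h.not_gt (sum_lt_sum (fun i _ => ?_) ⟨i₀, mem_univ _, ?_⟩)
  · rcases (hTA i).lt_or_eq with hA | hA
    · exact (min_le_right _ _).trans (hAB i hA)
    · exact (min_le_left _ _).trans hA.ge
  · exact (min_le_right _ _).trans_lt (not_le.mp hi₀)

/-- If `F` is t-intersecting and `T` is a t-multiset with `F_T ≠ F`, then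
`|F_T| ≤ k * (n*k).choose (k - t - 1)`. -/
theorem kernel_part_small (n k t : ℕ) (F : Finset (Fin n → ℕ))
    (hF : ∀ A ∈ F, ∑ i, A i = k)
    (hint : ∀ A ∈ F, ∀ B ∈ F, t ≤ ∑ i, min (A i) (B i))
    (T : Fin n → ℕ) (hT : ∑ i, T i = t)
    (hne : F.filter (fun A => ∀ i, T i ≤ A i) ≠ F) :
    (F.filter (fun A => ∀ i, T i ≤ A i)).card ≤ k * (n * k).choose (k - t - 1) := by
  obtain ⟨B, hBF, hBT⟩ : ∃ B ∈ F, ¬ ∀ i, T i ≤ B i := by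
    simpa [filter_eq_self] using hne
  obtain ⟨i₀, -⟩ := not_forall.mp hBT
  set S : Finset (Fin n) := {j | T j < B j}
  have hcover : F.filter (fun A => ∀ i, T i ≤ A i) ⊆
      S.biUnion fun j => {A ∈ F | ∀ i, (T + Pi.single j 1 : _ → ℕ) i ≤ A i} := by
    intro A hA
    obtain ⟨hAF, hTA⟩ := mem_filter.mp hA
    obtain ⟨j, hjA, hjB⟩ := exists_lt_lt_of_sum_le_sum_min hTA hBT (hT ▸ hint A hAF B hBF)
    exact mem_biUnion.mpr ⟨j, mem_filter.mpr ⟨mem_univ _, hjB⟩,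
      mem_filter.mpr ⟨hAF, add_single_one_le hTA hjA⟩⟩
  have hfiber (j : Fin n) : #{A ∈ F | ∀ i, (T + Pi.single j 1 : _ → ℕ) i ≤ A i} ≤
      (n + (k - t - 1) - 1).choose (k - t - 1) := by
    have hsum : ∑ i, (T + Pi.single j 1 : _ → ℕ) i = t + 1 := by simp [sum_add_distrib, hT]
    -- `convert` reconciles the decidability instances of the two filters
    convert card_filter_forall_le_le_card_piAntidiag hF (T + Pi.single j 1 : _ → ℕ)
    rw [hsum, card_piAntidiag_univ, Fintype.card_fin, Nat.sub_sub]
  have hS : #S ≤ k := hF B hBF ▸ card_filter_lt_le_sum T B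
  have hchoose : (n + (k - t - 1) - 1).choose (k - t - 1) ≤ (n * k).choose (k - t - 1) := by
    rcases Nat.eq_zero_or_pos (k - t - 1) with hm | hm
    · simp [hm]
    · exact Nat.choose_add_sub_one_le_choose_mul i₀.pos (by omega)
  calc #(F.filter fun A => ∀ i, T i ≤ A i)
      ≤ ∑ j ∈ S, #{A ∈ F | ∀ i, (T + Pi.single j 1 : _ → ℕ) i ≤ A i} :=
        (card_le_card hcover).trans card_biUnion_le
    _ ≤ #S * (n + (k - t - 1) - 1).choose (k - t - 1) := by
        simpa using sum_le_card_nsmul S _ _ fun j _ => hfiber j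
    _ ≤ k * (n * k).choose (k - t - 1) := Nat.mul_le_mul hS hchoose
end

section
/- There exists n₀ = n₀(k,t) such that for all n ≥ n₀, a t-intersecting family F of k-multisets of [n] has |F| = binomial(n+k−t−1, k−t) if and only if there is a fixed t-multiset T such that F consists of all k-multisets containing T. -/
/-!
If all members of `F` contain a common `t`-multiset `T`, then `F` lies in the star of `T`,
whose size is exactly the extremal value, so equality forces `F` to be the whole star.
Otherwise fix `A ∈ F`. Every member `C` contains one of the at most `2 ^ k` submultisets
`T ≤ A` of size `t`; for each such `T` some `B ∈ F` misses `T`, and since `C` meets `B` in at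
least `t` elements, `C` exceeds `T` in a coordinate where `B` is nonzero. So `C` contains one of
at most `k` multisets of size `t + 1`, giving `|F| ≤ 2 ^ k k multichoose(n, k - t - 1)`, which is
`o(multichoose(n, k - t))` as `n → ∞`.
-/

open Finset

namespace MultisetEKR

variable {ι : Type*} [Fintype ι] [DecidableEq ι]

lemma card_piAntidiag_univ (k : ℕ) :
    #(piAntidiag (univ : Finset ι) k) = (Fintype.card ι).multichoose k := by
  rw [← map_sym_eq_piAntidiag, card_map, sym_univ, card_univ, Sym.card_sym_eq_multichoose]

lemma mem_piAntidiag_univ {k : ℕ} {m : ι → ℕ} : m ∈ piAntidiag univ k ↔ ∑ i, m i = k := by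
  simp [mem_piAntidiag]

def fullStar (k : ℕ) (T : ι → ℕ) : Finset (ι → ℕ) := {m ∈ piAntidiag univ k | ∀ i, T i ≤ m i}

lemma mem_fullStar {k : ℕ} {T m : ι → ℕ} : m ∈ fullStar k T ↔ ∑ i, m i = k ∧ T ≤ m := by
  simp [fullStar, Pi.le_def]

lemma fullStar_eq_map_add {k : ℕ} {T : ι → ℕ} (hTk : ∑ i, T i ≤ k) :
    fullStar k T = (piAntidiag univ (k - ∑ i, T i)).map (addRightEmbedding T) := by
  ext m
  simp only [mem_fullStar, mem_map, mem_piAntidiag_univ, addRightEmbedding_apply]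
  constructor
  · rintro ⟨hm, hTm⟩
    refine ⟨m - T, ?_, tsub_add_cancel_of_le hTm⟩
    rw [← hm, ← sum_tsub_distrib _ fun i _ => hTm i]
    rfl
  · rintro ⟨a, ha, rfl⟩
    refine ⟨?_, le_add_self⟩
    simp only [Pi.add_apply, sum_add_distrib, ha]
    omega

lemma card_fullStar {k : ℕ} {T : ι → ℕ} (hTk : ∑ i, T i ≤ k) :
    #(fullStar k T) = (Fintype.card ι).multichoose (k - ∑ i, T i) := by
  rw [fullStar_eq_map_add hTk, card_map, card_piAntidiag_univ]

lemma sum_add_single (T : ι → ℕ) (i : ι) :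
    ∑ j, (T + Pi.single i 1 : ι → ℕ) j = ∑ j, T j + 1 := by
  simp [sum_add_distrib]

omit [Fintype ι] in
lemma add_single_le_iff {T C : ι → ℕ} {i : ι} : T + Pi.single i 1 ≤ C ↔ T ≤ C ∧ T i < C i := by
  simp only [Pi.le_def, Pi.add_apply]
  constructor
  · intro h
    refine ⟨fun j => le_trans (Nat.le_add_right _ _) (h j), ?_⟩
    simpa using h i
  · rintro ⟨h, hi⟩ j
    rcases eq_or_ne j i with rfl | hj
    · simpa using hi
    · simpa [hj] using h j

lemma exists_le_sum_eq (g : ι → ℕ) {t : ℕ} (ht : t ≤ ∑ i, g i) :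
    ∃ T ≤ g, ∑ i, T i = t := by
  induction t with
  | zero => exact ⟨0, fun _ => Nat.zero_le _, by simp⟩
  | succ t ih =>
    obtain ⟨T, hTg, hT⟩ := ih (by omega)
    obtain ⟨i, -, hi⟩ := exists_lt_of_sum_lt (s := univ) (f := T) (g := g) (by omega)
    exact ⟨T + Pi.single i 1, add_single_le_iff.2 ⟨hTg, hi⟩, by rw [sum_add_single, hT]⟩

omit [DecidableEq ι] in
lemma card_support_le_sum (A : ι → ℕ) : #{i | A i ≠ 0} ≤ ∑ i, A i := by
  rw [card_filter]
  exact sum_le_sum fun i _ => by split_ifs <;> omega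

lemma card_Iic_le_two_pow_sum (A : ι → ℕ) : #(Iic A) ≤ 2 ^ ∑ i, A i := by
  rw [Pi.card_Iic, ← prod_pow_eq_pow_sum]
  exact prod_le_prod' fun i _ => by simpa using (A i).lt_two_pow_self

lemma mul_multichoose_lt {n j c : ℕ} (hn : 0 < n) (h : c * (j + 1) < n + j) :
    c * n.multichoose j < n.multichoose (j + 1) := by
  obtain ⟨N, hN⟩ : ∃ N, n + j = N + 1 := ⟨n + j - 1, by omega⟩
  have hpos : 0 < n.multichoose j := by
    rw [Nat.multichoose_eq]
    exact Nat.choose_pos (by omega)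
  have key : (n + j) * n.multichoose j = n.multichoose (j + 1) * (j + 1) := by
    rw [Nat.multichoose_eq, Nat.multichoose_eq, show n + (j + 1) - 1 = N + 1 by omega,
      show n + j - 1 = N by omega, hN, Nat.add_one_mul_choose_eq]
  refine Nat.lt_of_mul_lt_mul_right (a := j + 1) ?_
  calc c * n.multichoose j * (j + 1) = c * (j + 1) * n.multichoose j := by ring
    _ < (n + j) * n.multichoose j := Nat.mul_lt_mul_of_pos_right h hpos
    _ = n.multichoose (j + 1) * (j + 1) := key

def IsIntersecting (t : ℕ) (F : Finset (ι → ℕ)) : Prop :=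
  ∀ A ∈ F, ∀ B ∈ F, t ≤ ∑ i, min (A i) (B i)

variable {k t : ℕ} {F : Finset (ι → ℕ)}

lemma inter_fullStar_subset_biUnion (hint : IsIntersecting t F) {T B : ι → ℕ}
    (hT : ∑ i, T i = t) (hB : B ∈ F) (hTB : ¬ T ≤ B) :
    F ∩ fullStar k T ⊆
      ({i | B i ≠ 0} : Finset ι).biUnion fun i => fullStar k (T + Pi.single i 1) := by
  intro C hC
  obtain ⟨hCF, hCk, hTC⟩ := mem_inter.1 hC |>.imp_right mem_fullStar.1
  have hTB_lt : ∑ i, min (T i) (B i) < ∑ i, min (C i) (B i) := by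
    simp only [Pi.le_def, not_forall, not_le] at hTB
    obtain ⟨j, hj⟩ := hTB
    have : ∑ i, min (T i) (B i) < ∑ i, T i :=
      sum_lt_sum (fun i _ => min_le_left _ _) ⟨j, mem_univ j, by omega⟩
    have := hint C hCF B hB
    omega
  obtain ⟨i, -, hi⟩ := exists_lt_of_sum_lt hTB_lt
  have hTCi := hTC i
  simp only [mem_biUnion, mem_filter, mem_univ, true_and, mem_fullStar]
  exact ⟨i, by omega, hCk, add_single_le_iff.2 ⟨hTC, by omega⟩⟩

lemma card_inter_fullStar_le (hint : IsIntersecting t F) (htk : t < k) {T B : ι → ℕ}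
    (hT : ∑ i, T i = t) (hB : B ∈ F) (hBk : ∑ i, B i = k) (hTB : ¬ T ≤ B) :
    #(F ∩ fullStar k T) ≤ k * (Fintype.card ι).multichoose (k - t - 1) := by
  have hcard_succ : ∀ i,
      #(fullStar k (T + Pi.single i 1)) = (Fintype.card ι).multichoose (k - t - 1) := by
    intro i
    rw [card_fullStar (by rw [sum_add_single]; omega), sum_add_single, hT, Nat.sub_sub]
  calc #(F ∩ fullStar k T)
      ≤ #(({i | B i ≠ 0} : Finset ι).biUnion fun i => fullStar k (T + Pi.single i 1)) :=
        card_le_card (inter_fullStar_subset_biUnion hint hT hB hTB)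
    _ ≤ ∑ i ∈ {i | B i ≠ 0}, #(fullStar k (T + Pi.single i 1)) := card_biUnion_le
    _ = #{i | B i ≠ 0} * (Fintype.card ι).multichoose (k - t - 1) := by
        rw [sum_congr rfl fun i _ => hcard_succ i, sum_const, smul_eq_mul]
    _ ≤ k * (Fintype.card ι).multichoose (k - t - 1) :=
        Nat.mul_le_mul_right _ (hBk ▸ card_support_le_sum B)

lemma subset_biUnion_inter_fullStar (hint : IsIntersecting t F) (hF : ∀ C ∈ F, ∑ i, C i = k)
    {A : ι → ℕ} (hA : A ∈ F) :
    F ⊆ {T ∈ Iic A | ∑ i, T i = t}.biUnion fun T => F ∩ fullStar k T := by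
  intro C hC
  obtain ⟨T, hT, hTt⟩ := exists_le_sum_eq (A ⊓ C) (hint A hA C hC)
  simp only [mem_biUnion, mem_filter, mem_Iic, mem_inter, mem_fullStar]
  exact ⟨T, ⟨hT.trans inf_le_left, hTt⟩, hC, hF C hC, hT.trans inf_le_right⟩

theorem card_le_of_forall_exists_not_le (hint : IsIntersecting t F)
    (hF : ∀ C ∈ F, ∑ i, C i = k) (htk : t < k)
    (hne : ∀ T : ι → ℕ, ∑ i, T i = t → ∃ B ∈ F, ¬ T ≤ B) :
    #F ≤ 2 ^ k * k * (Fintype.card ι).multichoose (k - t - 1) := by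
  rcases F.eq_empty_or_nonempty with rfl | ⟨A, hA⟩
  · simp
  have hcover : ∀ T ∈ {T ∈ Iic A | ∑ i, T i = t},
      #(F ∩ fullStar k T) ≤ k * (Fintype.card ι).multichoose (k - t - 1) := by
    intro T hT
    have hTt := (mem_filter.1 hT).2
    obtain ⟨B, hB, hTB⟩ := hne T hTt
    exact card_inter_fullStar_le hint htk hTt hB (hF B hB) hTB
  calc #F ≤ #({T ∈ Iic A | ∑ i, T i = t}.biUnion fun T => F ∩ fullStar k T) :=
        card_le_card (subset_biUnion_inter_fullStar hint hF hA)
    _ ≤ ∑ T ∈ {T ∈ Iic A | ∑ i, T i = t}, #(F ∩ fullStar k T) := card_biUnion_le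
    _ ≤ #{T ∈ Iic A | ∑ i, T i = t} * (k * (Fintype.card ι).multichoose (k - t - 1)) :=
        sum_le_card_nsmul _ _ _ hcover
    _ ≤ 2 ^ k * (k * (Fintype.card ι).multichoose (k - t - 1)) := by
        gcongr
        exact (card_filter_le _ _).trans (hF A hA ▸ card_Iic_le_two_pow_sum A)
    _ = 2 ^ k * k * (Fintype.card ι).multichoose (k - t - 1) := (mul_assoc _ _ _).symm

end MultisetEKR

open MultisetEKR

theorem EKR_multiset_equality_general (k t : ℕ) (htk : t ≤ k) :
    ∃ n₀ : ℕ, ∀ n : ℕ, n₀ ≤ n → ∀ F : Finset (Fin n → ℕ),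
      (∀ A ∈ F, ∑ i, A i = k) →
      (∀ A ∈ F, ∀ B ∈ F, t ≤ ∑ i, min (A i) (B i)) →
      (F.card = (n + k - t - 1).choose (k - t) ↔
        ∃ T : Fin n → ℕ, ∑ i, T i = t ∧
          ∀ m : Fin n → ℕ, m ∈ F ↔ (∑ i, m i = k ∧ ∀ i, T i ≤ m i)) := by
  refine ⟨2 ^ k * k * k + 1, fun n hn F hF hint => ?_⟩
  have hcard_star :
      ∀ T : Fin n → ℕ, ∑ i, T i = t → #(fullStar k T) = n.multichoose (k - t) := by
    intro T hT
    rw [card_fullStar (hT ▸ htk), hT, Fintype.card_fin]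
  rw [show (n + k - t - 1).choose (k - t) = n.multichoose (k - t) by
    rw [Nat.multichoose_eq]; congr 1; omega]
  constructor
  · intro hcard
    obtain ⟨T, hT, hTF⟩ : ∃ T : Fin n → ℕ, ∑ i, T i = t ∧ ∀ B ∈ F, T ≤ B := by
      by_contra! hne
      rcases htk.lt_or_eq with htk | rfl
      · have hbound := card_le_of_forall_exists_not_le hint hF htk hne
        have hgrowth := mul_multichoose_lt (n := n) (j := k - t - 1) (c := 2 ^ k * k) (by omega)
          (by have := Nat.mul_le_mul_left (2 ^ k * k) (show k - t - 1 + 1 ≤ k by omega); omega)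
        rw [Fintype.card_fin] at hbound
        rw [show k - t - 1 + 1 = k - t by omega] at hgrowth
        omega
      · -- for `t = k` the extremal size is `1`, and the single member is a common `t`-multiset
        obtain ⟨A, rfl⟩ := card_eq_one.1 (hcard.trans (by simp))
        obtain ⟨B, hB, hAB⟩ := hne A (hF A (mem_singleton_self A))
        exact hAB (mem_singleton.1 hB ▸ le_rfl)
    have hsub : F ⊆ fullStar k T := fun A hA => mem_fullStar.2 ⟨hF A hA, hTF A hA⟩
    refine ⟨T, hT, fun m => ?_⟩
    rw [eq_of_subset_of_card_le hsub (by rw [hcard_star T hT, hcard]), mem_fullStar,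
      Pi.le_def]
  · rintro ⟨T, hT, hFT⟩
    rw [← hcard_star T hT]
    congr 1
    ext m
    rw [hFT, mem_fullStar, Pi.le_def]

/-- For `n` large enough, a t-intersecting family of k-multisets of [n] has
size `(n + k - t - 1).choose (k - t)` iff it is the family of all k-multisets
containing a fixed t-multiset. -/
theorem EKR_multiset_equality (k t : ℕ) (ht : 1 ≤ t) (htk : t ≤ k) :
    ∃ n₀ : ℕ, ∀ n : ℕ, n₀ ≤ n → ∀ F : Finset (Fin n → ℕ),
      (∀ A ∈ F, ∑ i, A i = k) →
      (∀ A ∈ F, ∀ B ∈ F, t ≤ ∑ i, min (A i) (B i)) →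
      (F.card = (n + k - t - 1).choose (k - t) ↔
        ∃ T : Fin n → ℕ, ∑ i, T i = t ∧
          ∀ m : Fin n → ℕ, m ∈ F ↔ (∑ i, m i = k ∧ ∀ i, T i ≤ m i)) :=
  EKR_multiset_equality_general k t htk
end

section
/- (Interval shift lemma) Let X = {1,...,2k}. For an interval Y ⊆ X and p ≤ |Y|, let I(p,Y) be the family of all p-element subintervals of Y, and let φ(Y) = {k − ⌊|Y|/2⌋, ..., k + ⌈|Y|/2⌉ − 1} be the centered interval of length |Y|. Define d(I(p,Y), I(q,Y')) = min{|I ∩ J| : I ∈ I(p,Y), J ∈ I(q,Y')}. Then d(I(p,φ(Y)), I(q,φ(Y'))) ≥ d(I(p,Y), I(q,Y')) for all valid p, q, Y, Y'. -/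
/-- `intervalFam p Y` is the family of all p-element subintervals of `Y`. -/
def intervalFam (p : ℕ) (Y : Finset ℤ) : Set (Finset ℤ) :=
  {I | ∃ a : ℤ, I = Finset.Icc a (a + p - 1) ∧ I ⊆ Y}

/-- The centered interval of length `|Y|` inside `{1, ..., 2k}`. -/
noncomputable def phi (k : ℕ) (Y : Finset ℤ) : Finset ℤ :=
  Finset.Icc ((k : ℤ) - (Y.card / 2 : ℕ)) ((k : ℤ) + ((Y.card + 1) / 2 : ℕ) - 1)

/-- `d(I(p,Y), I(q,Y')) = min {|I ∩ J| : I ∈ I(p,Y), J ∈ I(q,Y')}`. -/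
noncomputable def intervalDist (p : ℕ) (Y : Finset ℤ) (q : ℕ) (Y' : Finset ℤ) : ℕ :=
  sInf {c : ℕ | ∃ I ∈ intervalFam p Y, ∃ J ∈ intervalFam q Y', c = (I ∩ J).card}

/-- Key arithmetic fact: the smaller of the two extreme-configuration overlaps in the
original intervals is at most the overlap of any configuration in the centered intervals. -/
lemma key_ov (k p q u v u' v' a b m n m' n' : ℤ)
    (hp : 1 ≤ p) (hq : 1 ≤ q)
    (hpc : p ≤ v + 1 - u) (hqc : q ≤ v' + 1 - u')
    (hmn : m + n = v + 1 - u) (hm : m ≤ n) (hn : n ≤ m + 1)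
    (hmn' : m' + n' = v' + 1 - u') (hm' : m' ≤ n') (hn' : n' ≤ m' + 1)
    (ha1 : k - m ≤ a) (ha2 : a + p - 1 ≤ k + n - 1)
    (hb1 : k - m' ≤ b) (hb2 : b + q - 1 ≤ k + n' - 1) :
    min ((min (u + p - 1) v' + 1 - max u (v' - q + 1)).toNat)
        ((min v (u' + q - 1) + 1 - max (v - p + 1) u').toNat)
      ≤ (min (a + p - 1) (b + q - 1) + 1 - max a b).toNat := by
  omega

/-- Cardinality of the intersection of two integer `Finset.Icc` intervals. -/
lemma card_Icc_inter_Icc (a x b y : ℤ) :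
    ((Finset.Icc a x) ∩ Finset.Icc b y).card = (min x y + 1 - max a b).toNat := by
  have h : (Finset.Icc a x) ∩ Finset.Icc b y = Finset.Icc (max a b) (min x y) := by
    ext z
    simp only [Finset.mem_inter, Finset.mem_Icc]
    omega
  rw [h, Int.card_Icc]

/-- Interval shift lemma: centering intervals does not decrease the minimum
pairwise intersection. -/
theorem interval_shift (k p q : ℕ) (Y Y' : Finset ℤ)
    (hY : ∃ u v : ℤ, Y = Finset.Icc u v) (hY' : ∃ u v : ℤ, Y' = Finset.Icc u v)
    (hYX : Y ⊆ Finset.Icc 1 (2 * k : ℤ)) (hY'X : Y' ⊆ Finset.Icc 1 (2 * k : ℤ))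
    (hp : p ≤ Y.card) (hq : q ≤ Y'.card) :
    intervalDist p Y q Y' ≤ intervalDist p (phi k Y) q (phi k Y') := by
  obtain ⟨u, v, rfl⟩ := hY
  obtain ⟨u', v', rfl⟩ := hY'
  have hp' : p ≤ (v + 1 - u).toNat := by rwa [Int.card_Icc] at hp
  have hq' : q ≤ (v' + 1 - u').toNat := by rwa [Int.card_Icc] at hq
  set L : ℤ := (k : ℤ) - (((Finset.Icc u v).card) / 2 : ℕ) with hL
  set L' : ℤ := (k : ℤ) - (((Finset.Icc u' v').card) / 2 : ℕ) with hL'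
  -- nonemptiness of the centered family's distance set
  have hI₀ : Finset.Icc L (L + (p : ℤ) - 1) ∈ intervalFam p (phi k (Finset.Icc u v)) := by
    refine ⟨L, rfl, ?_⟩
    unfold phi
    rw [← hL]
    refine Finset.Icc_subset_Icc le_rfl ?_
    rw [hL, Int.card_Icc]
    omega
  have hJ₀ : Finset.Icc L' (L' + (q : ℤ) - 1) ∈ intervalFam q (phi k (Finset.Icc u' v')) := by
    refine ⟨L', rfl, ?_⟩
    unfold phi
    rw [← hL']
    refine Finset.Icc_subset_Icc le_rfl ?_
    rw [hL', Int.card_Icc]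
    omega
  have hTne : {c : ℕ | ∃ I ∈ intervalFam p (phi k (Finset.Icc u v)),
      ∃ J ∈ intervalFam q (phi k (Finset.Icc u' v')), c = (I ∩ J).card}.Nonempty :=
    ⟨_, _, hI₀, _, hJ₀, rfl⟩
  unfold intervalDist
  obtain ⟨I, ⟨a, hIa, hIsub⟩, J, ⟨b, hJb, hJsub⟩, hval⟩ := Nat.sInf_mem hTne
  rw [hval]
  -- degenerate case p = 0
  rcases Nat.eq_zero_or_pos p with hp0 | hp1
  · refine le_trans (Nat.sInf_le ⟨_, ⟨u, rfl, ?_⟩, _, ⟨u', rfl, ?_⟩, rfl⟩) ?_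
    · intro x hx
      rw [Finset.mem_Icc] at hx ⊢
      omega
    · intro x hx
      rw [Finset.mem_Icc] at hx ⊢
      omega
    · have he : Finset.Icc u (u + (p : ℤ) - 1) = ∅ := Finset.Icc_eq_empty (by omega)
      rw [he]
      simp
  -- degenerate case q = 0
  rcases Nat.eq_zero_or_pos q with hq0 | hq1
  · refine le_trans (Nat.sInf_le ⟨_, ⟨u, rfl, ?_⟩, _, ⟨u', rfl, ?_⟩, rfl⟩) ?_
    · intro x hx
      rw [Finset.mem_Icc] at hx ⊢
      omega
    · intro x hx
      rw [Finset.mem_Icc] at hx ⊢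
      omega
    · have he : Finset.Icc u' (u' + (q : ℤ) - 1) = ∅ := Finset.Icc_eq_empty (by omega)
      rw [he]
      simp
  -- main case: p, q ≥ 1; extract the position constraints for a and b
  have haC : L ≤ a ∧ a + (p : ℤ) - 1
      ≤ (k : ℤ) + ((((Finset.Icc u v).card) + 1) / 2 : ℕ) - 1 := by
    rw [hIa] at hIsub
    unfold phi at hIsub
    rw [← hL] at hIsub
    exact (Finset.Icc_subset_Icc_iff (by omega)).mp hIsub
  have hbC : L' ≤ b ∧ b + (q : ℤ) - 1
      ≤ (k : ℤ) + ((((Finset.Icc u' v').card) + 1) / 2 : ℕ) - 1 := by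
    rw [hJb] at hJsub
    unfold phi at hJsub
    rw [← hL'] at hJsub
    exact (Finset.Icc_subset_Icc_iff (by omega)).mp hJsub
  have hcv : ((Finset.Icc u v).card : ℤ) = v + 1 - u := by
    rw [Int.card_Icc]; omega
  have hcv' : ((Finset.Icc u' v').card : ℤ) = v' + 1 - u' := by
    rw [Int.card_Icc]; omega
  have hkey := key_ov (k : ℤ) p q u v u' v' a b
    (((Finset.Icc u v).card / 2 : ℕ)) ((((Finset.Icc u v).card + 1) / 2 : ℕ))
    (((Finset.Icc u' v').card / 2 : ℕ)) ((((Finset.Icc u' v').card + 1) / 2 : ℕ))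
    (by omega) (by omega) (by omega) (by omega)
    (by omega) (by omega) (by omega)
    (by omega) (by omega) (by omega)
    (by omega) (by omega) (by omega) (by omega)
  rcases min_le_iff.mp hkey with hcase | hcase
  · -- config A: I' at the left end of Y, J' at the right end of Y'
    refine le_trans (Nat.sInf_le
      ⟨_, ⟨u, rfl, Finset.Icc_subset_Icc le_rfl (by omega)⟩,
       _, ⟨v' - (q : ℤ) + 1, rfl, Finset.Icc_subset_Icc (by omega) (by omega)⟩, rfl⟩) ?_
    rw [hIa, hJb]
    simp only [card_Icc_inter_Icc]
    omega
  · -- config B: I' at the right end of Y, J' at the left end of Y'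
    refine le_trans (Nat.sInf_le
      ⟨_, ⟨v - (p : ℤ) + 1, rfl, Finset.Icc_subset_Icc (by omega) (by omega)⟩,
       _, ⟨u', rfl, Finset.Icc_subset_Icc le_rfl (by omega)⟩, rfl⟩) ?_
    rw [hIa, hJb]
    simp only [card_Icc_inter_Icc]
    omega
end

section
/- (Shifting preserves t-intersection) Let F be a t-intersecting family of k-multisets of [n] with all multiplicities at most ℓ. For i < j define the exchange operation: if m(j,F) > m(i,F), let F' be obtained by swapping the multiplicities of columns i and j (m(i,F') = m(j,F), m(j,F') = m(i,F), others unchanged), and set c_{i,j}(F) = F' if F' ∉ F, else c_{i,j}(F) = F. Then c_{i,j}(F) := {c_{i,j}(F) : F ∈ F} is again a t-intersecting family of k-multisets with multiplicities at most ℓ, and |c_{i,j}(F)| = |F|. -/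
/-- Column-exchange shifting preserves the t-intersecting property, the
k-multiset property, the multiplicity bound, and the family's cardinality. -/
theorem shifting_preserves (n k t ℓ : ℕ) (F : Finset (Fin n → ℕ))
    (hk : ∀ m ∈ F, ∑ r, m r = k) (hℓ : ∀ m ∈ F, ∀ r, m r ≤ ℓ)
    (hint : ∀ A ∈ F, ∀ B ∈ F, t ≤ ∑ r, min (A r) (B r))
    (i j : Fin n) (hij : i < j) :
    let exch : (Fin n → ℕ) → (Fin n → ℕ) :=
      fun m r => if r = i then m j else if r = j then m i else m r
    let c : (Fin n → ℕ) → (Fin n → ℕ) :=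
      fun m => if m i < m j ∧ exch m ∉ F then exch m else m
    (∀ m ∈ F.image c, ∑ r, m r = k) ∧
    (∀ m ∈ F.image c, ∀ r, m r ≤ ℓ) ∧
    (∀ A ∈ F.image c, ∀ B ∈ F.image c, t ≤ ∑ r, min (A r) (B r)) ∧
    (F.image c).card = F.card := by
  intro exch c
  have hne : i ≠ j := hij.ne
  have hne' : j ≠ i := hij.ne'
  have hexch_eq : ∀ (m : Fin n → ℕ) (r : Fin n), exch m r = m (Equiv.swap i j r) := by
    intro m r
    simp only [exch, Equiv.swap_apply_def]
    split_ifs <;> rfl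
  have hsum : ∀ m : Fin n → ℕ, ∑ r, exch m r = ∑ r, m r := by
    intro m
    exact Fintype.sum_equiv (Equiv.swap i j) _ m (fun r => hexch_eq m r)
  have hsum2 : ∀ A B : Fin n → ℕ,
      ∑ r, min (exch A r) (exch B r) = ∑ r, min (A r) (B r) := by
    intro A B
    exact Fintype.sum_equiv (Equiv.swap i j) _ _
      (fun r => by rw [hexch_eq A r, hexch_eq B r])
  have hsum3 : ∀ A B : Fin n → ℕ,
      ∑ r, min (exch A r) (B r) = ∑ r, min (A r) (exch B r) := by
    intro A B
    exact Fintype.sum_equiv (Equiv.swap i j) _ _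
      (fun r => by rw [hexch_eq A r, hexch_eq B (Equiv.swap i j r), Equiv.swap_apply_self])
  have hjmem : j ∈ Finset.univ.erase i := Finset.mem_erase.2 ⟨hne', Finset.mem_univ j⟩
  have hsplit : ∀ h : Fin n → ℕ,
      ∑ r, h r = ∑ r ∈ (Finset.univ.erase i).erase j, h r + h j + h i := by
    intro h
    rw [← Finset.sum_erase_add Finset.univ h (Finset.mem_univ i),
      ← Finset.sum_erase_add (Finset.univ.erase i) h hjmem]
  have hinv : ∀ m : Fin n → ℕ, exch (exch m) = m := by
    intro m
    funext r
    simp only [exch]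
    split_ifs <;> simp_all
  -- main asymmetric intersection lemma
  have main : ∀ A ∈ F, ∀ B ∈ F, (A i < A j ∧ exch A ∉ F) →
      ¬(B i < B j ∧ exch B ∉ F) → t ≤ ∑ r, min (exch A r) (B r) := by
    intro A hA B hB hcA hcB
    by_cases hBF : exch B ∈ F
    · rw [hsum3]
      exact hint A hA (exch B) hBF
    · have hBji : B j ≤ B i := by
        by_contra h
        push_neg at h
        exact hcB ⟨h, hBF⟩
      calc t ≤ ∑ r, min (A r) (B r) := hint A hA B hB
        _ ≤ ∑ r, min (exch A r) (B r) := by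
            rw [hsplit (fun r => min (A r) (B r)), hsplit (fun r => min (exch A r) (B r))]
            have hrest : ∑ r ∈ (Finset.univ.erase i).erase j, min (exch A r) (B r)
                = ∑ r ∈ (Finset.univ.erase i).erase j, min (A r) (B r) := by
              refine Finset.sum_congr rfl fun r hr => ?_
              have hrj : r ≠ j := (Finset.mem_erase.1 hr).1
              have hri : r ≠ i := (Finset.mem_erase.1 (Finset.mem_erase.1 hr).2).1
              simp [exch, hri, hrj]
            rw [hrest]
            have e1 : exch A i = A j := by simp [exch]
            have e2 : exch A j = A i := by simp [exch, hne']
            rw [e1, e2]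
            have := hcA.1
            omega
  refine ⟨?_, ?_, ?_, ?_⟩
  · intro m hm
    obtain ⟨m', hm', rfl⟩ := Finset.mem_image.1 hm
    by_cases h : m' i < m' j ∧ exch m' ∉ F
    · simp only [c, if_pos h]
      rw [hsum]
      exact hk m' hm'
    · simp only [c, if_neg h]
      exact hk m' hm'
  · intro m hm r
    obtain ⟨m', hm', rfl⟩ := Finset.mem_image.1 hm
    by_cases h : m' i < m' j ∧ exch m' ∉ F
    · simp only [c, if_pos h, exch]
      split_ifs <;> exact hℓ m' hm' _
    · simp only [c, if_neg h]
      exact hℓ m' hm' r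
  · intro A' hA' B' hB'
    obtain ⟨A, hA, rfl⟩ := Finset.mem_image.1 hA'
    obtain ⟨B, hB, rfl⟩ := Finset.mem_image.1 hB'
    by_cases hcA : A i < A j ∧ exch A ∉ F <;> by_cases hcB : B i < B j ∧ exch B ∉ F
    · simp only [c, if_pos hcA, if_pos hcB]
      rw [hsum2]
      exact hint A hA B hB
    · simp only [c, if_pos hcA, if_neg hcB]
      exact main A hA B hB hcA hcB
    · simp only [c, if_neg hcA, if_pos hcB]
      have : ∑ r, min (A r) (exch B r) = ∑ r, min (exch B r) (A r) := by
        exact Finset.sum_congr rfl fun r _ => min_comm _ _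
      rw [this]
      exact main B hB A hA hcB hcA
    · simp only [c, if_neg hcA, if_neg hcB]
      exact hint A hA B hB
  · apply Finset.card_image_of_injOn
    intro A hA B hB hAB
    by_cases hcA : A i < A j ∧ exch A ∉ F <;> by_cases hcB : B i < B j ∧ exch B ∉ F
    · simp only [c, if_pos hcA, if_pos hcB] at hAB
      have := congrArg exch hAB
      rwa [hinv, hinv] at this
    · simp only [c, if_pos hcA, if_neg hcB] at hAB
      exact absurd (hAB ▸ hB) hcA.2
    · simp only [c, if_neg hcA, if_pos hcB] at hAB
      exact absurd (hAB ▸ hA) hcB.2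
    · simpa only [c, if_neg hcA, if_neg hcB] using hAB
end

section
/- (Reduction inequality) Let F be a family of k-multisets of [n] such that the supports (sets of elements with positive multiplicity) of any two members intersect in at least t elements. For t ≤ s ≤ k let G_s be the set of supports of size s occurring among members of F. Then |F| ≤ ∑_{s=t}^{k} |G_s| · binomial(k−1, k−s). -/
/-!
Sorting `F` by support, it suffices to bound each fibre. The members of `F` with support `S`
are determined by `m - 1`, a multiset of size `k - |S|` on `S`, and there are
`(|S| + (k - |S|) - 1).choose (k - |S|) = (k - 1).choose (k - |S|)` of those. Taking `A = B`
in the hypothesis gives `t ≤ |S|`, and `|S| ≤ k` always, so the fibres are indexed by `Icc t k`.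
-/

open Finset

namespace Finset

lemma card_piAntidiag_nat {ι : Type*} [DecidableEq ι] (s : Finset ι) (n : ℕ) :
    #(piAntidiag s n) = (#s + n - 1).choose n := by
  rw [← card_finsuppAntidiag_nat_eq_choose, finsuppAntidiag, card_map, card_attach]

end Finset

section PosSupport

variable {ι : Type*} [Fintype ι]

def posSupport (m : ι → ℕ) : Finset ι := univ.filter (fun i => 0 < m i)

@[simp]
lemma mem_posSupport {m : ι → ℕ} {i : ι} : i ∈ posSupport m ↔ 0 < m i := by
  simp [posSupport]

lemma sum_posSupport (m : ι → ℕ) : ∑ i ∈ posSupport m, m i = ∑ i, m i :=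
  sum_filter_of_ne fun _ _ h => Nat.pos_of_ne_zero h

lemma card_posSupport_le_sum (m : ι → ℕ) : #(posSupport m) ≤ ∑ i, m i := by
  rw [← sum_posSupport, card_eq_sum_ones]
  exact sum_le_sum fun i hi => mem_posSupport.mp hi

lemma sub_one_mem_piAntidiag [DecidableEq ι] (m : ι → ℕ) :
    m - 1 ∈ piAntidiag (posSupport m) (∑ i, m i - #(posSupport m)) := by
  refine mem_piAntidiag.mpr ⟨?_, fun i hi => mem_posSupport.mpr ?_⟩
  · rw [← sum_posSupport, card_eq_sum_ones,
      ← sum_tsub_distrib _ fun i hi => mem_posSupport.mp hi]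
    rfl
  · simp only [Pi.sub_apply, Pi.one_apply] at hi
    omega

lemma eq_of_sub_one_eq_of_posSupport_eq {m m' : ι → ℕ} (hsupp : posSupport m = posSupport m')
    (hsub : m - 1 = m' - 1) : m = m' := by
  funext i
  have hpos : 0 < m i ↔ 0 < m' i := by
    rw [← mem_posSupport, ← mem_posSupport, hsupp]
  have := congrFun hsub i
  simp only [Pi.sub_apply, Pi.one_apply] at this
  omega

lemma card_filter_posSupport_eq_le [DecidableEq ι] {F : Finset (ι → ℕ)} {k : ℕ}
    (hk : ∀ m ∈ F, ∑ i, m i = k) {S : Finset ι} (hS : #S ≤ k) :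
    #{m ∈ F | posSupport m = S} ≤ (k - 1).choose (k - #S) := by
  have hk' : #S + (k - #S) - 1 = k - 1 := by omega
  rw [← hk', ← card_piAntidiag_nat]
  refine card_le_card_of_injOn (· - 1) (fun m hm => ?_) fun m hm m' hm' h => ?_
  · obtain ⟨hmF, rfl⟩ := mem_filter.mp hm
    simpa only [mem_coe, hk m hmF] using sub_one_mem_piAntidiag m
  · exact eq_of_sub_one_eq_of_posSupport_eq
      ((mem_filter.mp hm).2.trans (mem_filter.mp hm').2.symm) h

end PosSupport

/-- Reduction inequality: if the supports of any two members of a family of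
k-multisets intersect in at least t elements, then
`|F| ≤ ∑_{s=t}^{k} |G_s| * (k-1).choose (k-s)`, where `G_s` is the set of
supports of size `s` among members of `F`. -/
theorem reduction_inequality (n k t : ℕ) (F : Finset (Fin n → ℕ))
    (hk : ∀ m ∈ F, ∑ i, m i = k)
    (hsupp : ∀ A ∈ F, ∀ B ∈ F,
      t ≤ (Finset.univ.filter (fun i => 0 < A i ∧ 0 < B i)).card) :
    F.card ≤ ∑ s ∈ Finset.Icc t k,
      ((F.image (fun m => Finset.univ.filter (fun i => 0 < m i))).filter
        (fun S => S.card = s)).card * (k - 1).choose (k - s) := by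
  change #F ≤ ∑ s ∈ Icc t k, #{S ∈ F.image posSupport | #S = s} * (k - 1).choose (k - s)
  have hcard : ∀ S ∈ F.image posSupport, #S ∈ Icc t k := by
    rintro _ hS
    obtain ⟨m, hm, rfl⟩ := mem_image.mp hS
    exact mem_Icc.mpr ⟨by simpa [posSupport] using hsupp m hm m hm,
      hk m hm ▸ card_posSupport_le_sum m⟩
  calc #F = ∑ S ∈ F.image posSupport, #{m ∈ F | posSupport m = S} :=
        card_eq_sum_card_image _ _
    _ ≤ ∑ S ∈ F.image posSupport, (k - 1).choose (k - #S) :=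
        sum_le_sum fun S hS => card_filter_posSupport_eq_le hk (mem_Icc.mp (hcard S hS)).2
    _ = ∑ s ∈ Icc t k, #{S ∈ F.image posSupport | #S = s} * (k - 1).choose (k - s) := by
        rw [← sum_fiberwise_of_maps_to' hcard fun s => (k - 1).choose (k - s)]
        simp only [sum_const, smul_eq_mul]
end

section
/- (Set-system lift preserves t-intersection) Let G be a family of subsets of [n], each of size between t and k, such that |G ∩ G'| ≥ t for all G, G' ∈ G. Form the family F' of k-element subsets of [n+k−1] by taking each G ∈ G (of size s) together with every (k−s)-element subset of the fixed k−1 extra elements {n+1,...,n+k−1}. Then F' is a t-intersecting family of k-subsets of [n+k−1] of size ∑_{G ∈ G} binomial(k−1, k−|G|). -/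
/-!
A lifted set `A ∪ B` has `B` inside the new ground elements and `A` disjoint from them, so it
recovers both `A` (as the part outside the new elements) and `B`. Hence distinct pairs give
distinct sets and the size is the sum of the binomial counts; the sizes add up to `k`; and since
every lifted set contains its base set, intersections can only grow.
-/

open Finset

namespace Finset

variable {α : Type*} [DecidableEq α]

def lift (𝒢 : Finset (Finset α)) (X : Finset α) (k : ℕ) : Finset (Finset α) :=
  𝒢.biUnion fun A => (X.powersetCard (k - #A)).image (A ∪ ·)

variable {𝒢 : Finset (Finset α)} {X : Finset α} {k : ℕ}

theorem mem_lift {S : Finset α} :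
    S ∈ lift 𝒢 X k ↔ ∃ A ∈ 𝒢, ∃ B ⊆ X, #B = k - #A ∧ A ∪ B = S := by
  simp only [lift, mem_biUnion, mem_image, mem_powersetCard, and_assoc]

theorem exists_subset_of_mem_lift {S : Finset α} (hS : S ∈ lift 𝒢 X k) : ∃ A ∈ 𝒢, A ⊆ S := by
  obtain ⟨A, hA, B, -, -, rfl⟩ := mem_lift.1 hS
  exact ⟨A, hA, subset_union_left⟩

theorem card_of_mem_lift (hdisj : ∀ A ∈ 𝒢, Disjoint A X) (hle : ∀ A ∈ 𝒢, #A ≤ k)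
    {S : Finset α} (hS : S ∈ lift 𝒢 X k) : #S = k := by
  obtain ⟨A, hA, B, hBX, hB, rfl⟩ := mem_lift.1 hS
  rw [card_union_of_disjoint ((hdisj A hA).mono_right hBX), hB, Nat.add_sub_cancel' (hle A hA)]

theorem le_card_inter_of_mem_lift {t : ℕ} (hint : ∀ A ∈ 𝒢, ∀ A' ∈ 𝒢, t ≤ #(A ∩ A'))
    {S S' : Finset α} (hS : S ∈ lift 𝒢 X k) (hS' : S' ∈ lift 𝒢 X k) : t ≤ #(S ∩ S') := by
  obtain ⟨A, hA, hAS⟩ := exists_subset_of_mem_lift hS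
  obtain ⟨A', hA', hAS'⟩ := exists_subset_of_mem_lift hS'
  exact (hint A hA A' hA').trans (card_le_card (inter_subset_inter hAS hAS'))

theorem union_sdiff_eq_of_disjoint_of_subset {A B X : Finset α} (hA : Disjoint A X) (hB : B ⊆ X) :
    (A ∪ B) \ X = A := by
  rw [union_sdiff_distrib, sdiff_eq_empty_iff_subset.2 hB, union_empty, hA.sdiff_eq_left]

theorem card_lift (hdisj : ∀ A ∈ 𝒢, Disjoint A X) :
    #(lift 𝒢 X k) = ∑ A ∈ 𝒢, (#X).choose (k - #A) := by
  rw [lift, card_biUnion]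
  · refine sum_congr rfl fun A hA => ?_
    rw [card_image_of_injOn, card_powersetCard]
    intro B hB B' hB' h
    have hB := (hdisj A hA).mono_right (mem_powersetCard.1 hB).1
    have hB' := (hdisj A hA).mono_right (mem_powersetCard.1 hB').1
    rw [← union_sdiff_cancel_left hB, ← union_sdiff_cancel_left hB']
    exact congrArg (· \ A) h
  · intro A hA A' hA' hne
    refine disjoint_left.2 fun S hS hS' => hne ?_
    obtain ⟨B, hB, rfl⟩ := mem_image.1 hS
    obtain ⟨B', hB', hS⟩ := mem_image.1 hS'
    rw [← union_sdiff_eq_of_disjoint_of_subset (hdisj A hA) (mem_powersetCard.1 hB).1,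
      ← union_sdiff_eq_of_disjoint_of_subset (hdisj A' hA') (mem_powersetCard.1 hB').1, hS]

end Finset

theorem Fin.card_filter_le_val (m n : ℕ) : #{i : Fin m | n ≤ i} = m - n := by
  have h := card_filter_add_card_filter_not (s := (univ : Finset (Fin m))) (· < n)
  simp only [not_lt, card_filter_val_lt, card_univ, Fintype.card_fin] at h
  omega

theorem set_system_lift_general (n k t : ℕ)
    (G : Finset (Finset (Fin (n + k - 1))))
    (hfirst : ∀ A ∈ G, ∀ x ∈ A, (x : ℕ) < n)
    (hcard : ∀ A ∈ G, t ≤ A.card ∧ A.card ≤ k)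
    (hint : ∀ A ∈ G, ∀ B ∈ G, t ≤ (A ∩ B).card) :
    let extras : Finset (Fin (n + k - 1)) :=
      Finset.univ.filter (fun x => n ≤ (x : ℕ))
    let F' : Finset (Finset (Fin (n + k - 1))) :=
      G.biUnion (fun A => (extras.powersetCard (k - A.card)).image (fun B => A ∪ B))
    (∀ S ∈ F', S.card = k) ∧
    (∀ S ∈ F', ∀ S' ∈ F', t ≤ (S ∩ S').card) ∧
    F'.card = ∑ A ∈ G, (k - 1).choose (k - A.card) := by
  intro extras F'
  have hextras : #extras = k - 1 := by
    rw [Fin.card_filter_le_val]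
    omega
  have hdisj : ∀ A ∈ G, Disjoint A extras := fun A hA =>
    disjoint_left.2 fun x hx hx' => by
      have := hfirst A hA x hx
      simp only [extras, mem_filter] at hx'
      omega
  refine ⟨fun S => card_of_mem_lift hdisj fun A hA => (hcard A hA).2,
    fun S hS S' hS' => le_card_inter_of_mem_lift hint hS hS', ?_⟩
  rw [← hextras]
  exact card_lift hdisj

/-- Set-system lift preserves t-intersection. Each member `G` (of size `s`,
contained in the first `n` elements of `[n+k-1]`) is extended by every
`(k-s)`-element subset of the fixed `k-1` extra elements; the resulting family
`F'` consists of k-sets, is t-intersecting, and has size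
`∑_{G ∈ 𝒢} (k-1).choose (k - |G|)`. -/
theorem set_system_lift (n k t : ℕ) (ht : 1 ≤ t) (htk : t ≤ k) (hn : 1 ≤ n)
    (G : Finset (Finset (Fin (n + k - 1))))
    (hfirst : ∀ A ∈ G, ∀ x ∈ A, (x : ℕ) < n)
    (hcard : ∀ A ∈ G, t ≤ A.card ∧ A.card ≤ k)
    (hint : ∀ A ∈ G, ∀ B ∈ G, t ≤ (A ∩ B).card) :
    let extras : Finset (Fin (n + k - 1)) :=
      Finset.univ.filter (fun x => n ≤ (x : ℕ))
    let F' : Finset (Finset (Fin (n + k - 1))) :=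
      G.biUnion (fun A => (extras.powersetCard (k - A.card)).image (fun B => A ∪ B))
    (∀ S ∈ F', S.card = k) ∧
    (∀ S ∈ F', ∀ S' ∈ F', t ≤ (S ∩ S').card) ∧
    F'.card = ∑ A ∈ G, (k - 1).choose (k - A.card) :=
  set_system_lift_general n k t G hfirst hcard hint
end

section
/- (Kernel removal via shifting, Lemma on t-kernels) Let n ≥ 2k−t and let F be a t-intersecting family of k-multisets of [n] that is stable under all the compression operations ψ_{i,j} (i.e., ψ_{i,j}(F) = F for all i ≠ j, where ψ_{i,j} balances columns i and j). Then for all F₁, F₂ ∈ F, the supports of F₁ and F₂ intersect in at least t elements: |{i ∈ [n] : m(i,F₁) ≥ 1 and m(i,F₂) ≥ 1}| ≥ t. -/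
/-- Kernel lemma: if `n ≥ 2k - t` and a t-intersecting family of k-multisets of
[n] is closed under moving one unit from a column of multiplicity ≥ 2 to an
empty column, then any two members have supports meeting in ≥ t elements. -/
theorem stable_family_kernel (n k t : ℕ) (hn : 2 * k - t ≤ n)
    (F : Finset (Fin n → ℕ))
    (hk : ∀ m ∈ F, ∑ i, m i = k)
    (hint : ∀ A ∈ F, ∀ B ∈ F, t ≤ ∑ i, min (A i) (B i))
    (hstable : ∀ m ∈ F, ∀ i j : Fin n, 2 ≤ m i → m j = 0 →
      (fun r => if r = i then m i - 1 else if r = j then 1 else m r) ∈ F) :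
    ∀ A ∈ F, ∀ B ∈ F,
      t ≤ (Finset.univ.filter (fun i => 0 < A i ∧ 0 < B i)).card := by
  intro A hA
  suffices H : ∀ W : ℕ, ∀ B ∈ F,
      (∑ i ∈ Finset.univ.filter (fun i => 0 < A i ∧ 0 < B i), B i) ≤ W →
      t ≤ (Finset.univ.filter (fun i => 0 < A i ∧ 0 < B i)).card by
    intro B hB; exact H _ B hB le_rfl
  intro W
  induction W using Nat.strong_induction_on with
  | _ W ih =>
  intro B hB hW
  set C := Finset.univ.filter (fun i => 0 < A i ∧ 0 < B i) with hC
  have hsumC : ∑ i, min (A i) (B i) = ∑ i ∈ C, min (A i) (B i) := by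
    rw [hC]
    exact (Finset.sum_filter_of_ne (fun x _ hx => by
      constructor <;> omega)).symm
  by_cases hmin : ∀ i, min (A i) (B i) ≤ 1
  · have hs : ∑ i, min (A i) (B i) = C.card := by
      rw [hsumC]
      have : ∀ i ∈ C, min (A i) (B i) = 1 := by
        intro i hi
        rw [hC] at hi
        simp only [Finset.mem_filter, Finset.mem_univ, true_and] at hi
        have := hmin i; omega
      rw [Finset.sum_congr rfl this]
      simp
    have := hint A hA B hB; omega
  · push_neg at hmin
    obtain ⟨i, hi⟩ := hmin
    have hAi : 2 ≤ A i := by omega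
    have hBi : 2 ≤ B i := by omega
    have hiC : i ∈ C := by
      rw [hC]; simp only [Finset.mem_filter, Finset.mem_univ, true_and]; omega
    by_cases hex : ∃ j, A j = 0 ∧ B j = 0
    · obtain ⟨j, hAj, hBj⟩ := hex
      have hij : i ≠ j := by intro h; rw [h] at hAi; omega
      set B' := (fun r => if r = i then B i - 1 else if r = j then 1 else B r) with hB'def
      have hB' : B' ∈ F := hstable B hB i j hBi hBj
      have hBval : ∀ r, (r = i → B' r = B i - 1) ∧ (r ≠ i → r = j → B' r = 1) ∧
          (r ≠ i → r ≠ j → B' r = B r) := by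
        intro r
        refine ⟨fun h => by simp [hB'def, h], fun h1 h2 => by simp [hB'def, h1, h2, Ne.symm hij],
          fun h1 h2 => by simp [hB'def, h1, h2]⟩
      have hCeq : Finset.univ.filter (fun r => 0 < A r ∧ 0 < B' r) = C := by
        rw [hC]
        apply Finset.filter_congr
        intro r _
        by_cases hri : r = i
        · rw [(hBval r).1 hri, hri]; omega
        · by_cases hrj : r = j
          · rw [(hBval r).2.1 hri hrj, hrj]; omega
          · rw [(hBval r).2.2 hri hrj]
      have hBr' : ∀ r ∈ C.erase i, B' r = B r := by
        intro r hr
        have hri := Finset.ne_of_mem_erase hr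
        have hrC := Finset.mem_of_mem_erase hr
        rw [hC] at hrC
        simp only [Finset.mem_filter, Finset.mem_univ, true_and] at hrC
        have hrj : r ≠ j := by intro h; rw [h] at hrC; omega
        exact (hBval r).2.2 hri hrj
      have hsum : ∑ r ∈ C, B' r + 1 = ∑ r ∈ C, B r := by
        have e1 := Finset.add_sum_erase C B hiC
        have e2 := Finset.add_sum_erase C B' hiC
        have e3 : ∑ r ∈ C.erase i, B' r = ∑ r ∈ C.erase i, B r :=
          Finset.sum_congr rfl hBr'
        have e4 : B' i = B i - 1 := (hBval i).1 rfl
        omega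
      have hWpos : 2 ≤ ∑ r ∈ C, B r := by
        have := Finset.single_le_sum (f := B) (fun r _ => Nat.zero_le _) hiC
        omega
      have hkey := ih (∑ r ∈ C, B' r) (by omega) B' hB'
        (le_of_eq (by rw [hCeq]))
      rwa [hCeq] at hkey
    · push_neg at hex
      set SA := Finset.univ.filter (fun r => 0 < A r) with hSA
      set SB := Finset.univ.filter (fun r => 0 < B r) with hSB
      have hcup : SA ∪ SB = Finset.univ := by
        ext r
        simp only [hSA, hSB, Finset.mem_union, Finset.mem_filter, Finset.mem_univ,
          true_and, iff_true]
        have := hex r; omega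
      have hcap : SA ∩ SB = C := by
        ext r
        simp only [hSA, hSB, hC, Finset.mem_inter, Finset.mem_filter, Finset.mem_univ,
          true_and]
      have hcard : SA.card + SB.card = n + C.card := by
        have h1 := Finset.card_union_add_card_inter SA SB
        rw [hcup, hcap] at h1
        simp only [Finset.card_univ, Fintype.card_fin] at h1
        omega
      set E := ∑ r ∈ C, (min (A r) (B r) - 1) with hE
      have hsE : ∑ r ∈ C, min (A r) (B r) = C.card + E := by
        rw [hE, Finset.card_eq_sum_ones, ← Finset.sum_add_distrib]
        apply Finset.sum_congr rfl
        intro r hr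
        rw [hC] at hr
        simp only [Finset.mem_filter, Finset.mem_univ, true_and] at hr
        omega
      have hsuppA : ∀ (X : Fin n → ℕ), X ∈ F →
          (∀ r ∈ C, min (A r) (B r) ≤ X r) →
          (Finset.univ.filter (fun r => 0 < X r)).card + E ≤ k := by
        intro X hX hXC
        have hkX := hk X hX
        set SX := Finset.univ.filter (fun r => 0 < X r) with hSX
        have hCX : C ⊆ SX := by
          intro r hr
          have h1 := hXC r hr
          rw [hC] at hr
          simp only [Finset.mem_filter, Finset.mem_univ, true_and] at hr
          rw [hSX]
          simp only [Finset.mem_filter, Finset.mem_univ, true_and]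
          omega
        have h2 : ∑ r, X r = ∑ r ∈ SX, X r :=
          (Finset.sum_filter_of_ne (fun x _ hx => by omega)).symm
        have h3 : ∑ r ∈ SX, X r = SX.card + ∑ r ∈ SX, (X r - 1) := by
          rw [Finset.card_eq_sum_ones SX, ← Finset.sum_add_distrib]
          apply Finset.sum_congr rfl
          intro r hr
          rw [hSX] at hr
          simp only [Finset.mem_filter, Finset.mem_univ, true_and] at hr
          omega
        have h4 : E ≤ ∑ r ∈ SX, (X r - 1) := by
          calc E ≤ ∑ r ∈ C, (X r - 1) := by
                apply Finset.sum_le_sum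
                intro r hr
                have := hXC r hr; omega
            _ ≤ ∑ r ∈ SX, (X r - 1) :=
                Finset.sum_le_sum_of_subset hCX
        omega
      have hA' : SA.card + E ≤ k :=
        hsuppA A hA (fun r _ => min_le_left _ _)
      have hB'' : SB.card + E ≤ k :=
        hsuppA B hB (fun r _ => min_le_right _ _)
      have hst : t ≤ C.card + E := by
        have := hint A hA B hB
        omega
      omega
end
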